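/- arXiv:1312.6289 — 2 statements merged into one kernel-verified Lean document; each statement's English description precedes it below -/
import Mathlib

section
/- Let A be a unital C*-algebra and let n be an odd positive integer. Let q_1, …, q_n and r_1, …, r_n be projections in A such that the 2n projections q_1, …, q_n, r_1, …, r_n are pairwise orthogonal and ∑_{j=1}^n (q_j + r_j) = 1. Set p := ∑_{j=1}^n r_j and u := 1 − 2p. Suppose that for each j = 1, …, n−1 there is an element v_j ∈ A with v_j* v_j = q_j + q_{j+1} and v_j v_j* = r_j + r_{j+1}. Then there exist positive contractions f⁰, f¹ ∈ A such that f⁰ · (u f⁰ u*) = 0, f¹ · (u f¹ u*) = 0, and ‖f⁰ + u f⁰ u* + f¹ + u f¹ u* − 1‖ ≤ 1/n. -/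
private lemma aux1 {A : Type*} [CStarAlgebra A] (s t v : A)
    (hst : s * t = 0) (hts : t * s = 0)
    (hss : s * s = s) (htt : t * t = t)
    (hsa : star s = s) (hta : star t = t)
    (h1 : star v * v = s) (h2 : v * star v = t) :
    v * s = v ∧ t * v = v ∧ s * star v = star v ∧ star v * t = star v ∧
    s * v = 0 ∧ v * t = 0 ∧ star v * s = 0 ∧ t * star v = 0 ∧
    (s + t + v + star v) * (s + t + v + star v) = (s + t + v + star v) + (s + t + v + star v) ∧
    (s + t + v + star v) * (s + t - v - star v) = 0 := by
  have hvs : v * s = v := by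
    have h0 : star (v * s - v) * (v * s - v) = 0 := by
      rw [star_sub, star_mul, hsa]
      calc (s * star v - star v) * (v * s - v)
          = s * (star v * v) * s - s * (star v * v) - (star v * v) * s + star v * v := by
            noncomm_ring
        _ = 0 := by simp only [h1, hss]; abel
    have := (CStarRing.star_mul_self_eq_zero_iff _).mp h0
    exact sub_eq_zero.mp this
  have htv : t * v = v := by
    calc t * v = v * star v * v := by rw [h2]
      _ = v * (star v * v) := by rw [mul_assoc]
      _ = v * s := by rw [h1]
      _ = v := hvs
  have hsv' : s * star v = star v := by
    have h := congrArg star hvs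
    rwa [star_mul, hsa] at h
  have hv't : star v * t = star v := by
    have h := congrArg star htv
    rwa [star_mul, hta] at h
  have hsv : s * v = 0 := by
    calc s * v = s * (t * v) := by rw [htv]
      _ = (s * t) * v := by rw [mul_assoc]
      _ = 0 := by rw [hst, zero_mul]
  have hvt : v * t = 0 := by
    calc v * t = (v * s) * t := by rw [hvs]
      _ = v * (s * t) := by rw [mul_assoc]
      _ = 0 := by rw [hst, mul_zero]
  have hv's : star v * s = 0 := by
    have h := congrArg star hsv
    rwa [star_mul, hsa, star_zero] at h
  have htv' : t * star v = 0 := by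
    have h := congrArg star hvt
    rwa [star_mul, hta, star_zero] at h
  have hvv : v * v = 0 := by
    calc v * v = v * (t * v) := by rw [htv]
      _ = (v * t) * v := by rw [mul_assoc]
      _ = 0 := by rw [hvt, zero_mul]
  have hv'v' : star v * star v = 0 := by
    have h := congrArg star hvv
    rwa [star_mul, star_zero] at h
  refine ⟨hvs, htv, hsv', hv't, hsv, hvt, hv's, htv', ?_, ?_⟩
  · calc (s + t + v + star v) * (s + t + v + star v)
        = s*s + s*t + s*v + s*star v + (t*s + t*t + t*v + t*star v)
          + (v*s + v*t + v*v + v*star v)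
          + (star v*s + star v*t + star v*v + star v*star v) := by noncomm_ring
      _ = _ := by
          rw [hss, hst, hsv, hsv', hts, htt, htv, htv', hvs, hvt, hvv, h2, hv's, hv't, h1,
            hv'v']
          abel
  · calc (s + t + v + star v) * (s + t - v - star v)
        = s*s + s*t - s*v - s*star v + (t*s + t*t - t*v - t*star v)
          + (v*s + v*t - v*v - v*star v)
          + (star v*s + star v*t - star v*v - star v*star v) := by noncomm_ring
      _ = 0 := by
          rw [hss, hst, hsv, hsv', hts, htt, htv, htv', hvs, hvt, hvv, h2, hv's, hv't, h1,
            hv'v']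
          abel

private lemma aux2 {A : Type*} [CStarAlgebra A] (s t v s' t' v' : A)
    (hvs : v * s = v) (hv't : star v * t = star v)
    (ht'v' : t' * v' = v') (hs'v' : s' * star v' = star v')
    (hss' : s * s' = 0) (hst' : s * t' = 0) (hts' : t * s' = 0) (htt' : t * t' = 0) :
    (s + t + v + star v) * (s' + t' + v' + star v') = 0 ∧
    (s + t + v + star v) * (s' + t' - v' - star v') = 0 := by
  have hvs' : v * s' = 0 := by
    calc v * s' = (v * s) * s' := by rw [hvs]
      _ = v * (s * s') := by rw [mul_assoc]
      _ = 0 := by rw [hss', mul_zero]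
  have hvt' : v * t' = 0 := by
    calc v * t' = (v * s) * t' := by rw [hvs]
      _ = v * (s * t') := by rw [mul_assoc]
      _ = 0 := by rw [hst', mul_zero]
  have hv's' : star v * s' = 0 := by
    calc star v * s' = (star v * t) * s' := by rw [hv't]
      _ = star v * (t * s') := by rw [mul_assoc]
      _ = 0 := by rw [hts', mul_zero]
  have hv't' : star v * t' = 0 := by
    calc star v * t' = (star v * t) * t' := by rw [hv't]
      _ = star v * (t * t') := by rw [mul_assoc]
      _ = 0 := by rw [htt', mul_zero]
  have has' : (s + t + v + star v) * s' = 0 := by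
    rw [add_mul, add_mul, add_mul, hss', hts', hvs', hv's']; abel
  have hat' : (s + t + v + star v) * t' = 0 := by
    rw [add_mul, add_mul, add_mul, hst', htt', hvt', hv't']; abel
  have hav' : (s + t + v + star v) * v' = 0 := by
    calc (s + t + v + star v) * v' = (s + t + v + star v) * (t' * v') := by rw [ht'v']
      _ = ((s + t + v + star v) * t') * v' := by rw [mul_assoc]
      _ = 0 := by rw [hat', zero_mul]
  have hav'' : (s + t + v + star v) * star v' = 0 := by
    calc (s + t + v + star v) * star v'
        = (s + t + v + star v) * (s' * star v') := by rw [hs'v']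
      _ = ((s + t + v + star v) * s') * star v' := by rw [mul_assoc]
      _ = 0 := by rw [has', zero_mul]
  constructor
  · rw [mul_add, mul_add, mul_add, has', hat', hav', hav'']; abel
  · rw [mul_sub, mul_sub, mul_add, has', hat', hav', hav'']; abel

/-- Let `A` be a unital C*-algebra and `n` an odd positive integer. Given pairwise
orthogonal projections `q 1, …, q n, r 1, …, r n` summing to `1`, with
`p = ∑ r j`, `u = 1 - 2p`, and partial isometries `v j` with
`(v j)* (v j) = q j + q (j+1)` and `(v j) (v j)* = r j + r (j+1)` for `1 ≤ j ≤ n-1`,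
there are positive contractions `f⁰, f¹` with `f⁰ ⊥ u f⁰ u*`, `f¹ ⊥ u f¹ u*` and
`‖f⁰ + u f⁰ u* + f¹ + u f¹ u* - 1‖ ≤ 1/n`. -/
theorem statement0 {A : Type*} [CStarAlgebra A] [PartialOrder A] [StarOrderedRing A]
    (n : ℕ) (hn_odd : Odd n) (hn_pos : 0 < n)
    (q r : ℕ → A)
    (hq_proj : ∀ j ∈ Finset.Icc 1 n, star (q j) = q j ∧ q j * q j = q j)
    (hr_proj : ∀ j ∈ Finset.Icc 1 n, star (r j) = r j ∧ r j * r j = r j)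
    (hqq : ∀ i ∈ Finset.Icc 1 n, ∀ j ∈ Finset.Icc 1 n, i ≠ j → q i * q j = 0)
    (hrr : ∀ i ∈ Finset.Icc 1 n, ∀ j ∈ Finset.Icc 1 n, i ≠ j → r i * r j = 0)
    (hqr : ∀ i ∈ Finset.Icc 1 n, ∀ j ∈ Finset.Icc 1 n, q i * r j = 0)
    (hsum : ∑ j ∈ Finset.Icc 1 n, (q j + r j) = 1)
    (p u : A) (hp : p = ∑ j ∈ Finset.Icc 1 n, r j) (hu : u = 1 - 2 * p)
    (v : ℕ → A)
    (hv : ∀ j ∈ Finset.Icc 1 (n - 1),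
      star (v j) * v j = q j + q (j + 1) ∧ v j * star (v j) = r j + r (j + 1)) :
    ∃ f₀ f₁ : A,
      0 ≤ f₀ ∧ ‖f₀‖ ≤ 1 ∧ 0 ≤ f₁ ∧ ‖f₁‖ ≤ 1 ∧
      f₀ * (u * f₀ * star u) = 0 ∧
      f₁ * (u * f₁ * star u) = 0 ∧
      ‖f₀ + u * f₀ * star u + f₁ + u * f₁ * star u - 1‖ ≤ 1 / n := by
  classical
  have hn0 : (n:ℝ) ≠ 0 := Nat.cast_ne_zero.mpr hn_pos.ne'
  have hn0' : (0:ℝ) ≤ 1 / n := by positivity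
  rcases subsingleton_or_nontrivial A with hA | hA
  · refine ⟨0, 0, le_refl 0, by simp, le_refl 0, by simp, by simp, by simp, ?_⟩
    have h0 : (0 + u * 0 * star u + 0 + u * 0 * star u - 1 : A) = 0 := Subsingleton.elim _ _
    rw [h0, norm_zero]; exact hn0'
  set I := Finset.Icc 1 n with hI_def
  set J := Finset.Icc 1 (n-1) with hJ_def
  have hmem : ∀ j ∈ J, j ∈ I ∧ j + 1 ∈ I := by
    intro j hj
    rw [hJ_def, Finset.mem_Icc] at hj
    rw [hI_def, Finset.mem_Icc, Finset.mem_Icc]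
    omega
  have hrq : ∀ i ∈ I, ∀ j ∈ I, r i * q j = 0 := by
    intro i hi j hj
    have h := congrArg star (hqr j hj i hi)
    rwa [star_mul, (hq_proj j hj).1, (hr_proj i hi).1, star_zero] at h
  set s : ℕ → A := fun j => q j + q (j+1) with hs_def
  set t : ℕ → A := fun j => r j + r (j+1) with ht_def
  set a : ℕ → A := fun j => s j + t j + v j + star (v j) with ha_def
  set b : ℕ → A := fun j => s j + t j - v j - star (v j) with hb_def
  have hv1 : ∀ j ∈ J, star (v j) * v j = s j := by
    intro j hj; simp only [hs_def]; exact (hv j hj).1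
  have hv2 : ∀ j ∈ J, v j * star (v j) = t j := by
    intro j hj; simp only [ht_def]; exact (hv j hj).2
  have hSstar : ∀ j ∈ J, star (s j) = s j := by
    intro j hj; obtain ⟨h1, h2⟩ := hmem j hj
    simp only [hs_def, star_add, (hq_proj j h1).1, (hq_proj (j+1) h2).1]
  have hTstar : ∀ j ∈ J, star (t j) = t j := by
    intro j hj; obtain ⟨h1, h2⟩ := hmem j hj
    simp only [ht_def, star_add, (hr_proj j h1).1, (hr_proj (j+1) h2).1]
  have hSidem : ∀ j ∈ J, s j * s j = s j := by
    intro j hj; obtain ⟨h1, h2⟩ := hmem j hj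
    simp only [hs_def]
    rw [add_mul, mul_add, mul_add, (hq_proj j h1).2, (hq_proj (j+1) h2).2,
      hqq j h1 (j+1) h2 (by omega), hqq (j+1) h2 j h1 (by omega)]
    abel
  have hTidem : ∀ j ∈ J, t j * t j = t j := by
    intro j hj; obtain ⟨h1, h2⟩ := hmem j hj
    simp only [ht_def]
    rw [add_mul, mul_add, mul_add, (hr_proj j h1).2, (hr_proj (j+1) h2).2,
      hrr j h1 (j+1) h2 (by omega), hrr (j+1) h2 j h1 (by omega)]
    abel
  have hST : ∀ j ∈ J, ∀ k ∈ J, s j * t k = 0 := by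
    intro j hj k hk
    obtain ⟨hj1, hj2⟩ := hmem j hj; obtain ⟨hk1, hk2⟩ := hmem k hk
    simp only [hs_def, ht_def]
    rw [add_mul, mul_add, mul_add, hqr j hj1 k hk1, hqr j hj1 (k+1) hk2,
      hqr (j+1) hj2 k hk1, hqr (j+1) hj2 (k+1) hk2]
    abel
  have hTS : ∀ j ∈ J, ∀ k ∈ J, t j * s k = 0 := by
    intro j hj k hk
    obtain ⟨hj1, hj2⟩ := hmem j hj; obtain ⟨hk1, hk2⟩ := hmem k hk
    simp only [hs_def, ht_def]
    rw [add_mul, mul_add, mul_add, hrq j hj1 k hk1, hrq j hj1 (k+1) hk2,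
      hrq (j+1) hj2 k hk1, hrq (j+1) hj2 (k+1) hk2]
    abel
  have hSS : ∀ j ∈ J, ∀ k ∈ J, j ≠ k → j + 1 ≠ k → j ≠ k + 1 → s j * s k = 0 := by
    intro j hj k hk d1 d2 d3
    obtain ⟨hj1, hj2⟩ := hmem j hj; obtain ⟨hk1, hk2⟩ := hmem k hk
    simp only [hs_def]
    rw [add_mul, mul_add, mul_add, hqq j hj1 k hk1 d1, hqq j hj1 (k+1) hk2 d3,
      hqq (j+1) hj2 k hk1 d2, hqq (j+1) hj2 (k+1) hk2 (by omega)]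
    abel
  have hTT : ∀ j ∈ J, ∀ k ∈ J, j ≠ k → j + 1 ≠ k → j ≠ k + 1 → t j * t k = 0 := by
    intro j hj k hk d1 d2 d3
    obtain ⟨hj1, hj2⟩ := hmem j hj; obtain ⟨hk1, hk2⟩ := hmem k hk
    simp only [ht_def]
    rw [add_mul, mul_add, mul_add, hrr j hj1 k hk1 d1, hrr j hj1 (k+1) hk2 d3,
      hrr (j+1) hj2 k hk1 d2, hrr (j+1) hj2 (k+1) hk2 (by omega)]
    abel
  have hD := fun j (hj : j ∈ J) =>
    aux1 (s j) (t j) (v j) (hST j hj j hj) (hTS j hj j hj) (hSidem j hj) (hTidem j hj)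
      (hSstar j hj) (hTstar j hj) (hv1 j hj) (hv2 j hj)
  have hvs : ∀ j ∈ J, v j * s j = v j := fun j hj => (hD j hj).1
  have htv : ∀ j ∈ J, t j * v j = v j := fun j hj => (hD j hj).2.1
  have hsv' : ∀ j ∈ J, s j * star (v j) = star (v j) := fun j hj => (hD j hj).2.2.1
  have hv't : ∀ j ∈ J, star (v j) * t j = star (v j) := fun j hj => (hD j hj).2.2.2.1
  have haa : ∀ j ∈ J, a j * a j = a j + a j := by
    intro j hj; simp only [ha_def]; exact (hD j hj).2.2.2.2.2.2.2.2.1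
  have hab : ∀ j ∈ J, a j * b j = 0 := by
    intro j hj; simp only [ha_def, hb_def]; exact (hD j hj).2.2.2.2.2.2.2.2.2
  have hastar : ∀ j ∈ J, star (a j) = a j := by
    intro j hj
    simp only [ha_def, star_add, star_star, hSstar j hj, hTstar j hj]
    abel
  have hcross : ∀ j ∈ J, ∀ k ∈ J, j % 2 = k % 2 → j ≠ k →
      a j * a k = 0 ∧ a j * b k = 0 := by
    intro j hj k hk hpar hne
    have d2 : j + 1 ≠ k := by omega
    have d3 : j ≠ k + 1 := by omega
    simp only [ha_def, hb_def]
    exact aux2 (s j) (t j) (v j) (s k) (t k) (v k) (hvs j hj) (hv't j hj) (htv k hk)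
      (hsv' k hk) (hSS j hj k hk hne d2 d3) (hST j hj k hk) (hTS j hj k hk)
      (hTT j hj k hk hne d2 d3)
  -- p and u facts
  have hpstar : star p = p := by
    rw [hp, star_sum]; exact Finset.sum_congr rfl fun i hi => (hr_proj i hi).1
  have hustar : star u = u := by
    have h2p : star (2 * p : A) = 2 * p := by rw [two_mul, star_add, hpstar, ← two_mul]
    rw [hu, star_sub, star_one, h2p]
  have hpq' : ∀ i ∈ I, p * q i = 0 := by
    intro i hi; rw [hp, Finset.sum_mul]
    exact Finset.sum_eq_zero fun k hk => hrq k hk i hi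
  have hqp' : ∀ i ∈ I, q i * p = 0 := by
    intro i hi; rw [hp, Finset.mul_sum]
    exact Finset.sum_eq_zero fun k hk => hqr i hi k hk
  have hpr' : ∀ i ∈ I, p * r i = r i := by
    intro i hi; rw [hp, Finset.sum_mul]
    rw [Finset.sum_eq_single_of_mem i hi fun k hk hne => hrr k hk i hi hne]
    exact (hr_proj i hi).2
  have hrp' : ∀ i ∈ I, r i * p = r i := by
    intro i hi; rw [hp, Finset.mul_sum]
    rw [Finset.sum_eq_single_of_mem i hi fun k hk hne => hrr i hi k hk (Ne.symm hne)]
    exact (hr_proj i hi).2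
  have hps : ∀ j ∈ J, p * s j = 0 ∧ s j * p = 0 := by
    intro j hj; obtain ⟨h1, h2⟩ := hmem j hj
    constructor
    · simp only [hs_def]; rw [mul_add, hpq' j h1, hpq' (j+1) h2, add_zero]
    · simp only [hs_def]; rw [add_mul, hqp' j h1, hqp' (j+1) h2, add_zero]
  have hpt : ∀ j ∈ J, p * t j = t j ∧ t j * p = t j := by
    intro j hj; obtain ⟨h1, h2⟩ := hmem j hj
    constructor
    · simp only [ht_def]; rw [mul_add, hpr' j h1, hpr' (j+1) h2]
    · simp only [ht_def]; rw [add_mul, hrp' j h1, hrp' (j+1) h2]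
  have hpv : ∀ j ∈ J, p * v j = v j := by
    intro j hj
    calc p * v j = p * (t j * v j) := by rw [htv j hj]
      _ = (p * t j) * v j := by rw [mul_assoc]
      _ = t j * v j := by rw [(hpt j hj).1]
      _ = v j := htv j hj
  have hvp : ∀ j ∈ J, v j * p = 0 := by
    intro j hj
    calc v j * p = (v j * s j) * p := by rw [hvs j hj]
      _ = v j * (s j * p) := by rw [mul_assoc]
      _ = 0 := by rw [(hps j hj).2, mul_zero]
  have hpv' : ∀ j ∈ J, p * star (v j) = 0 := by
    intro j hj
    calc p * star (v j) = p * (s j * star (v j)) := by rw [hsv' j hj]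
      _ = (p * s j) * star (v j) := by rw [mul_assoc]
      _ = 0 := by rw [(hps j hj).1, zero_mul]
  have hv'p : ∀ j ∈ J, star (v j) * p = star (v j) := by
    intro j hj
    calc star (v j) * p = (star (v j) * t j) * p := by rw [hv't j hj]
      _ = star (v j) * (t j * p) := by rw [mul_assoc]
      _ = star (v j) * t j := by rw [(hpt j hj).2]
      _ = star (v j) := hv't j hj
  have hconj : ∀ j ∈ J, u * a j * star u = b j := by
    intro j hj
    rw [hustar, hu]
    have hexp : (1 - 2*p) * a j * (1 - 2*p)
        = a j - 2*(p * a j) - 2*(a j * p) + 4*(p * a j * p) := by noncomm_ring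
    have hpa : p * a j = t j + v j := by
      simp only [ha_def]
      rw [mul_add, mul_add, mul_add, (hps j hj).1, (hpt j hj).1, hpv j hj, hpv' j hj]
      abel
    have hap : a j * p = t j + star (v j) := by
      simp only [ha_def]
      rw [add_mul, add_mul, add_mul, (hps j hj).2, (hpt j hj).2, hvp j hj, hv'p j hj]
      abel
    have hpap : p * a j * p = t j := by
      rw [hpa, add_mul, (hpt j hj).2, hvp j hj, add_zero]
    rw [hexp, hpap, hpa, hap]
    simp only [ha_def, hb_def]
    noncomm_ring
  -- the candidates
  set μ : ℕ → ℝ := fun j => if j % 2 = 1 then ((n:ℝ) - j)/n else (j:ℝ)/n with hμ_def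
  set e : ℕ → A := fun j => (2⁻¹:ℝ) • a j with he_def
  set K : ℕ → Finset ℕ := fun c => J.filter (fun j => j % 2 = c) with hK_def
  set F : ℕ → A := fun c => ∑ j ∈ K c, μ j • e j with hF_def
  have hKJ : ∀ c, ∀ j ∈ K c, j ∈ J ∧ j % 2 = c := by
    intro c j hj
    simp only [hK_def, Finset.mem_filter] at hj
    exact hj
  have hμ01 : ∀ j ∈ J, 0 ≤ μ j ∧ μ j ≤ 1 := by
    intro j hj
    rw [hJ_def, Finset.mem_Icc] at hj
    have h1 : (j:ℝ) ≤ n := by exact_mod_cast (by omega : j ≤ n)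
    have h2 : (0:ℝ) ≤ j := Nat.cast_nonneg j
    have hnpos : (0:ℝ) < n := by exact_mod_cast hn_pos
    simp only [hμ_def]
    split
    · constructor
      · apply div_nonneg _ hnpos.le; linarith
      · rw [div_le_one hnpos]; linarith
    · constructor
      · exact div_nonneg h2 hnpos.le
      · rw [div_le_one hnpos]; linarith
  have hee : ∀ j ∈ J, e j * e j = e j := by
    intro j hj
    simp only [he_def]
    rw [smul_mul_assoc, mul_smul_comm, haa j hj]
    module
  have hestar : ∀ j ∈ J, star (e j) = e j := by
    intro j hj
    simp only [he_def, star_smul, star_trivial, hastar j hj]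
  have hepos : ∀ j ∈ J, 0 ≤ e j := by
    intro j hj
    have h : star (e j) * e j = e j := by rw [hestar j hj, hee j hj]
    have h2 := star_mul_self_nonneg (e j)
    rwa [h] at h2
  have heek : ∀ j ∈ J, ∀ k ∈ J, j % 2 = k % 2 → j ≠ k → e j * e k = 0 := by
    intro j hj k hk hpar hne
    simp only [he_def]
    rw [smul_mul_assoc, mul_smul_comm, (hcross j hj k hk hpar hne).1, smul_zero, smul_zero]
  have hFpos : ∀ c, 0 ≤ F c := by
    intro c
    simp only [hF_def]
    apply Finset.sum_nonneg
    intro j hj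
    exact smul_nonneg (hμ01 j (hKJ c j hj).1).1 (hepos j (hKJ c j hj).1)
  have hFle1 : ∀ c, F c ≤ 1 := by
    intro c
    have hEidem : (∑ j ∈ K c, e j) * (∑ j ∈ K c, e j) = ∑ j ∈ K c, e j := by
      rw [Finset.sum_mul_sum]
      apply Finset.sum_congr rfl
      intro j hj
      rw [Finset.sum_eq_single_of_mem j hj fun k hk hne =>
        heek j (hKJ c j hj).1 k (hKJ c k hk).1 (by rw [(hKJ c j hj).2, (hKJ c k hk).2])
          (Ne.symm hne)]
      exact hee j (hKJ c j hj).1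
    have hEstar : star (∑ j ∈ K c, e j) = ∑ j ∈ K c, e j := by
      rw [star_sum]
      exact Finset.sum_congr rfl fun j hj => hestar j (hKJ c j hj).1
    have hE1 : (∑ j ∈ K c, e j) ≤ 1 := by
      rw [← sub_nonneg]
      have key : (1:A) - (∑ j ∈ K c, e j)
          = star (1 - (∑ j ∈ K c, e j)) * (1 - (∑ j ∈ K c, e j)) := by
        have expand : ((1:A) - (∑ j ∈ K c, e j)) * (1 - (∑ j ∈ K c, e j))
            = 1 - (∑ j ∈ K c, e j) - (∑ j ∈ K c, e j)
              + (∑ j ∈ K c, e j) * (∑ j ∈ K c, e j) := by noncomm_ring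
        rw [star_sub, star_one, hEstar, expand, hEidem]
        abel
      rw [key]
      exact star_mul_self_nonneg _
    have hFE : F c ≤ ∑ j ∈ K c, e j := by
      rw [← sub_nonneg]
      have key : (∑ j ∈ K c, e j) - F c = ∑ j ∈ K c, (1 - μ j) • e j := by
        simp only [hF_def]
        rw [← Finset.sum_sub_distrib]
        exact Finset.sum_congr rfl fun j hj => by rw [sub_smul, one_smul]
      rw [key]
      apply Finset.sum_nonneg
      intro j hj
      exact smul_nonneg (by linarith [(hμ01 j (hKJ c j hj).1).2]) (hepos j (hKJ c j hj).1)
    exact le_trans hFE hE1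
  have hFnorm : ∀ c, ‖F c‖ ≤ 1 := fun c =>
    (CStarAlgebra.norm_le_one_iff_of_nonneg _ (hFpos c)).mpr (hFle1 c)
  have hconjF : ∀ c, u * F c * star u = ∑ j ∈ K c, μ j • ((2⁻¹:ℝ) • b j) := by
    intro c
    simp only [hF_def]
    rw [Finset.mul_sum, Finset.sum_mul]
    apply Finset.sum_congr rfl
    intro j hj
    rw [mul_smul_comm, smul_mul_assoc]
    congr 1
    simp only [he_def]
    rw [mul_smul_comm, smul_mul_assoc, hconj j (hKJ c j hj).1]
  have hFperp : ∀ c, F c * (u * F c * star u) = 0 := by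
    intro c
    rw [hconjF c]
    simp only [hF_def]
    rw [Finset.sum_mul_sum]
    apply Finset.sum_eq_zero
    intro j hj
    apply Finset.sum_eq_zero
    intro k hk
    have habjk : a j * b k = 0 := by
      rcases eq_or_ne j k with rfl | hne
      · exact hab j (hKJ c j hj).1
      · exact (hcross j (hKJ c j hj).1 k (hKJ c k hk).1
          (by rw [(hKJ c j hj).2, (hKJ c k hk).2]) hne).2
    simp only [he_def, smul_mul_assoc, mul_smul_comm, habjk, smul_zero]
  -- the sum identity
  have hhalf : ∀ j ∈ J, μ j • e j + μ j • ((2⁻¹:ℝ) • b j)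
      = μ j • (q j + r j) + μ j • (q (j+1) + r (j+1)) := by
    intro j hj
    simp only [he_def, ha_def, hb_def, hs_def, ht_def]
    module
  have hFc : ∀ c, F c + u * F c * star u
      = ∑ j ∈ K c, (μ j • (q j + r j) + μ j • (q (j+1) + r (j+1))) := by
    intro c
    rw [hconjF c]
    simp only [hF_def]
    rw [← Finset.sum_add_distrib]
    exact Finset.sum_congr rfl fun j hj => hhalf j (hKJ c j hj).1
  have hK10 : ∀ (g : ℕ → A), ∑ j ∈ K 1, g j + ∑ j ∈ K 0, g j = ∑ j ∈ J, g j := by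
    intro g
    have h0 : K 0 = J.filter (fun j => ¬ (j % 2 = 1)) := by
      simp only [hK_def]
      exact Finset.filter_congr fun x _ => by omega
    rw [h0]
    simp only [hK_def]
    exact Finset.sum_filter_add_sum_filter_not J _ g
  have hend : ∑ j ∈ J, μ j • (q j + r j) = ∑ i ∈ I, μ i • (q i + r i) := by
    have h1 : I = insert n J := by
      rw [hI_def, hJ_def]
      ext x
      simp only [Finset.mem_Icc, Finset.mem_insert]
      omega
    have h2 : n ∉ J := by rw [hJ_def, Finset.mem_Icc]; omega
    rw [h1, Finset.sum_insert h2]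
    have hμn : μ n = 0 := by
      simp only [hμ_def]
      rw [if_pos (Nat.odd_iff.mp hn_odd), sub_self, zero_div]
    rw [hμn, zero_smul, zero_add]
  have hshift : ∑ j ∈ J, μ j • (q (j+1) + r (j+1)) = ∑ i ∈ I, μ (i-1) • (q i + r i) := by
    have h1 : I = insert 1 (Finset.Icc 2 n) := by
      rw [hI_def]
      ext x
      simp only [Finset.mem_Icc, Finset.mem_insert]
      omega
    have h2 : (1:ℕ) ∉ Finset.Icc 2 n := by rw [Finset.mem_Icc]; omega
    rw [h1, Finset.sum_insert h2]
    have hμ0 : μ (1-1) = 0 := by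
      simp only [hμ_def]
      norm_num
    rw [hμ0, zero_smul, zero_add]
    have h3 : Finset.Icc 2 n = J.map ⟨fun j => j + 1, add_left_injective 1⟩ := by
      rw [hJ_def]
      ext x
      simp only [Finset.mem_Icc, Finset.mem_map, Function.Embedding.coeFn_mk]
      constructor
      · intro hx; exact ⟨x - 1, by omega, by omega⟩
      · rintro ⟨y, hy, rfl⟩; omega
    rw [h3, Finset.sum_map]
    simp only [Function.Embedding.coeFn_mk, Nat.add_sub_cancel]
  have hTsum : F 1 + u * F 1 * star u + F 0 + u * F 0 * star u
      = ∑ i ∈ I, (μ (i-1) + μ i) • (q i + r i) := by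
    have step : F 1 + u * F 1 * star u + F 0 + u * F 0 * star u
        = (F 1 + u * F 1 * star u) + (F 0 + u * F 0 * star u) := by abel
    rw [step, hFc 1, hFc 0,
      hK10 (fun j => μ j • (q j + r j) + μ j • (q (j+1) + r (j+1))),
      Finset.sum_add_distrib, hend, hshift, ← Finset.sum_add_distrib]
    apply Finset.sum_congr rfl
    intro i _
    rw [add_smul]
    abel
  have hcoeff : ∀ i ∈ I, (μ (i-1) + μ i) - 1 = (n:ℝ)⁻¹ * (if i % 2 = 1 then (-1:ℝ) else 1) := by
    intro i hi
    rw [hI_def, Finset.mem_Icc] at hi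
    obtain ⟨hi1, hi2⟩ := hi
    have hin : (i:ℝ) ≤ n := by exact_mod_cast hi2
    have hi1' : (1:ℝ) ≤ i := by exact_mod_cast hi1
    have hc : ((i-1:ℕ):ℝ) = (i:ℝ) - 1 := by
      rw [Nat.cast_sub hi1, Nat.cast_one]
    simp only [hμ_def]
    rcases Nat.even_or_odd i with he | ho
    · rw [Nat.even_iff] at he
      have h2 : ¬ (i % 2 = 1) := by omega
      have h3 : (i-1) % 2 = 1 := by omega
      rw [if_pos h3, if_neg h2, if_neg h2, hc]
      field_simp
      ring
    · rw [Nat.odd_iff] at ho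
      have h3 : ¬ ((i-1) % 2 = 1) := by omega
      rw [if_neg h3, if_pos ho, if_pos ho, hc]
      field_simp
      ring
  have hππ : ∀ i ∈ I, ∀ k ∈ I, (q i + r i) * (q k + r k) = if i = k then q i + r i else 0 := by
    intro i hi k hk
    rcases eq_or_ne i k with rfl | hne
    · rw [if_pos rfl, add_mul, mul_add, mul_add, (hq_proj i hi).2, (hr_proj i hi).2,
        hqr i hi i hi, hrq i hi i hi]
      abel
    · rw [if_neg hne, add_mul, mul_add, mul_add, hqq i hi k hk hne, hrr i hi k hk hne,
        hqr i hi k hk, hrq i hi k hk]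
      abel
  set W : A := ∑ i ∈ I, (if i % 2 = 1 then (-1:ℝ) else 1) • (q i + r i) with hW_def
  have hT2 : F 1 + u * F 1 * star u + F 0 + u * F 0 * star u - 1 = (n:ℝ)⁻¹ • W := by
    rw [hTsum, ← hsum, ← Finset.sum_sub_distrib, hW_def, Finset.smul_sum]
    apply Finset.sum_congr rfl
    intro i hi
    calc (μ (i-1) + μ i) • (q i + r i) - (q i + r i)
        = ((μ (i-1) + μ i) - 1) • (q i + r i) := by rw [sub_smul, one_smul]
      _ = ((n:ℝ)⁻¹ * (if i % 2 = 1 then (-1:ℝ) else 1)) • (q i + r i) := by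
          rw [hcoeff i hi]
      _ = (n:ℝ)⁻¹ • ((if i % 2 = 1 then (-1:ℝ) else 1) • (q i + r i)) := by
          rw [mul_smul]
  have hWW : W * W = 1 := by
    rw [hW_def, Finset.sum_mul_sum]
    have hdiag : ∀ i ∈ I, (∑ k ∈ I, ((if i % 2 = 1 then (-1:ℝ) else 1) • (q i + r i)) *
        ((if k % 2 = 1 then (-1:ℝ) else 1) • (q k + r k))) = q i + r i := by
      intro i hi
      have side : ∀ k ∈ I, k ≠ i → ((if i % 2 = 1 then (-1:ℝ) else 1) • (q i + r i)) *
          ((if k % 2 = 1 then (-1:ℝ) else 1) • (q k + r k)) = 0 := by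
        intro k hk hne
        rw [smul_mul_assoc, mul_smul_comm, hππ i hi k hk, if_neg (Ne.symm hne), smul_zero,
          smul_zero]
      rw [Finset.sum_eq_single_of_mem i hi side]
      have hεε : (if i % 2 = 1 then (-1:ℝ) else 1) * (if i % 2 = 1 then (-1:ℝ) else 1)
          = 1 := by split <;> norm_num
      rw [smul_mul_assoc, mul_smul_comm, smul_smul, hεε, one_smul, hππ i hi i hi,
        if_pos rfl]
    rw [Finset.sum_congr rfl hdiag, hsum]
  have hWstar : star W = W := by
    rw [hW_def, star_sum]
    apply Finset.sum_congr rfl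
    intro i hi
    rw [star_smul, star_trivial, star_add, (hq_proj i hi).1, (hr_proj i hi).1]
  have hWnorm : ‖W‖ = 1 := by
    have h := CStarRing.norm_star_mul_self (x := W)
    rw [hWstar, hWW, norm_one] at h
    rcases mul_self_eq_one_iff.mp h.symm with h1 | h1
    · exact h1
    · have := norm_nonneg W; linarith
  refine ⟨F 1, F 0, hFpos 1, hFnorm 1, hFpos 0, hFnorm 0, hFperp 1, hFperp 0, ?_⟩
  rw [hT2, norm_smul, Real.norm_eq_abs, abs_of_nonneg (by positivity), hWnorm, mul_one,
    one_div]
end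

section
/- Let A be a unital C*-algebra, let p ∈ A be a projection and set u := 1 − 2p. Let q, r ∈ A be projections with p q = 0 and p r = r, and let v ∈ A satisfy v* v = q and v v* = r. Define e := (1/2)(q + r + v + v*). Then e is a projection, u e u* = (1/2)(q + r − v − v*), e · (u e u*) = 0, and e + u e u* = q + r. -/
private lemma mul_mul_of {A : Type*} [Ring A] {a b c : A} (h : a * b = c) (x : A) :
    a * (b * x) = c * x := by rw [← mul_assoc, h]

set_option maxHeartbeats 1000000 in
/-- Let `A` be a unital C*-algebra, `p` a projection, `u = 1 - 2p`. If `q, r` are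
projections with `p q = 0`, `p r = r`, and `v* v = q`, `v v* = r`, then
`e = (1/2)(q + r + v + v*)` is a projection, `u e u* = (1/2)(q + r - v - v*)`,
`e (u e u*) = 0`, and `e + u e u* = q + r`. -/
theorem statement1 {A : Type*} [CStarAlgebra A]
    (p q r v : A)
    (hp : star p = p ∧ p * p = p)
    (hq : star q = q ∧ q * q = q)
    (hr : star r = r ∧ r * r = r)
    (hpq : p * q = 0) (hpr : p * r = r)
    (hv : star v * v = q) (hv' : v * star v = r)
    (u e : A) (hu : u = 1 - 2 * p)
    (he : e = (1 / 2 : ℝ) • (q + r + v + star v)) :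
    (star e = e ∧ e * e = e) ∧
    u * e * star u = (1 / 2 : ℝ) • (q + r - v - star v) ∧
    e * (u * e * star u) = 0 ∧
    e + u * e * star u = q + r := by
  -- partial isometry identity
  have hvvv : v * star v * v = v := by
    have hw : star (v * star v * v - v) * (v * star v * v - v)
        = (star v * v) * (star v * v) * (star v * v)
          - (star v * v) * (star v * v) - (star v * v) * (star v * v)
          + star v * v := by
      simp only [star_sub, star_mul, star_star]
      noncomm_ring
    rw [hv, hq.2, hq.2] at hw
    have hw0 : star (v * star v * v - v) * (v * star v * v - v) = 0 := by
      rw [hw]; abel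
    have := (CStarRing.star_mul_self_eq_zero_iff _).mp hw0
    exact sub_eq_zero.mp this
  -- basic products
  have hqp : q * p = 0 := by
    have := congrArg star hpq; simpa [hp.1, hq.1] using this
  have hrp : r * p = r := by
    have := congrArg star hpr; simpa [hp.1, hr.1] using this
  have hqr : q * r = 0 := by rw [← hpr, ← mul_assoc, hqp, zero_mul]
  have hrq : r * q = 0 := by
    have := congrArg star hqr; simpa [hq.1, hr.1] using this
  have hrv : r * v = v := by rw [← hv']; exact hvvv
  have hvq : v * q = v := by rw [← hv, ← mul_assoc]; exact hvvv
  have hvr : star v * r = star v := by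
    have := congrArg star hrv; simpa [hr.1] using this
  have hqv : q * star v = star v := by
    have := congrArg star hvq; simpa [hq.1] using this
  have hqv0 : q * v = 0 := by rw [← hrv, ← mul_assoc, hqr, zero_mul]
  have hvq0 : star v * q = 0 := by
    have := congrArg star hqv0; simpa [hq.1] using this
  have hvv0 : v * v = 0 := by
    have h1 : v * v = (v * q) * v := by rw [hvq]
    rw [h1, mul_assoc, hqv0, mul_zero]
  have hvv0' : star v * star v = 0 := by
    have := congrArg star hvv0; simpa using this
  have hvr0 : v * r = 0 := by rw [← hv', ← mul_assoc, hvv0, zero_mul]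
  have hrv0 : r * star v = 0 := by
    have := congrArg star hvr0; simpa [hr.1] using this
  have hpv : p * v = v := by rw [← hrv, ← mul_assoc, hpr]
  have hvp : star v * p = star v := by
    have := congrArg star hpv; simpa [hp.1] using this
  have hvp0 : v * p = 0 := by rw [← hvq, mul_assoc, hqp, mul_zero]
  have hpv0 : p * star v = 0 := by
    have := congrArg star hvp0; simpa [hp.1] using this
  have hus : star u = u := by rw [hu, two_mul]; simp [hp.1]
  -- the four key identities, scalar-free parts
  have hss : (q + r + v + star v) * (q + r + v + star v)
      = (q + r + v + star v) + (q + r + v + star v) := by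
    simp only [mul_add, add_mul, hq.2, hr.2, hqr, hrq, hqv0, hqv, hrv, hrv0,
      hvq, hvr0, hvv0, hv', hvq0, hvr, hv, hvv0']
    abel
  have husu : u * (q + r + v + star v) * u = q + r - v - star v := by
    rw [hu, two_mul]
    simp only [sub_mul, mul_sub, one_mul, mul_one, mul_add, add_mul, mul_assoc,
      mul_mul_of hpq, mul_mul_of hpr, mul_mul_of hpv, mul_mul_of hpv0,
      mul_mul_of hqp, mul_mul_of hrp, mul_mul_of hvp0, mul_mul_of hvp,
      hpq, hpr, hpv, hpv0, hqp, hrp, hvp0, hvp, hp.2,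
      zero_mul, mul_zero, zero_add, add_zero]
    abel
  have hss' : (q + r + v + star v) * (q + r - v - star v) = 0 := by
    simp only [mul_add, add_mul, mul_sub, sub_mul, hq.2, hr.2, hqr, hrq, hqv0, hqv,
      hrv, hrv0, hvq, hvr0, hvv0, hv', hvq0, hvr, hv, hvv0']
    abel
  have hueu : u * e * star u = (1 / 2 : ℝ) • (q + r - v - star v) := by
    rw [hus, he, mul_smul_comm, smul_mul_assoc, husu]
  refine ⟨⟨?_, ?_⟩, hueu, ?_, ?_⟩
  · simp only [he, star_smul, star_add, hq.1, hr.1, star_star, star_trivial]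
    congr 1
    abel
  · rw [he, smul_mul_assoc, mul_smul_comm, hss, smul_smul, smul_add]
    module
  · rw [hueu, he, smul_mul_assoc, mul_smul_comm, hss', smul_zero, smul_zero]
  · rw [hueu, he, ← smul_add]
    have : q + r + v + star v + (q + r - v - star v) = (2 : ℝ) • (q + r) := by
      rw [two_smul]; abel
    rw [this, smul_smul]
    norm_num
end
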